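/- arXiv:1808.05095 — 4 statements merged into one kernel-verified Lean document; each statement's English description precedes it below -/
import Mathlib

section
/- If a family {f_{ij}}_{i∈I} in H satisfies that the series Σ_{i∈I, j∈[m]} c_{ij} f_{ij} converges for every {c_{ij}} ∈ (Σ_{j∈[m]} ⊕ ℓ²(I))_{ℓ²}, then {f_{ij}}_{i∈I,j∈[m]} is a Bessel woven, i.e., there exists D > 0 with Σ_{i,j} |⟨f, f_{ij}⟩|² ≤ D‖f‖² for all f ∈ H. -/
open scoped RealInnerProductSpace

section Aux

variable {H : Type*} [NormedAddCommGroup H] [InnerProductSpace ℝ H]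
  {α : Type*}

/-- Partial-sum synthesis operator over a finite set. -/
noncomputable def partialCLM (G : α → H) (s : Finset α) :
    lp (fun _ : α => ℝ) 2 →L[ℝ] H :=
  LinearMap.mkContinuous
    { toFun := fun c => ∑ p ∈ s, c p • G p
      map_add' := by
        intro c d
        simp [add_smul, Finset.sum_add_distrib]
      map_smul' := by
        intro r c
        simp [Finset.smul_sum, smul_smul] }
    (∑ p ∈ s, ‖G p‖)
    (by
      intro c
      calc ‖∑ p ∈ s, c p • G p‖ ≤ ∑ p ∈ s, ‖c p • G p‖ := norm_sum_le _ _
        _ ≤ ∑ p ∈ s, ‖c‖ * ‖G p‖ := by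
            refine Finset.sum_le_sum fun p _ => ?_
            rw [norm_smul]
            exact mul_le_mul_of_nonneg_right
              (lp.norm_apply_le_norm two_ne_zero c p) (norm_nonneg _)
        _ = (∑ p ∈ s, ‖G p‖) * ‖c‖ := by rw [← Finset.mul_sum, mul_comm])

theorem partialCLM_apply (G : α → H) (s : Finset α) (c : lp (fun _ : α => ℝ) 2) :
    partialCLM G s c = ∑ p ∈ s, c p • G p := rfl

theorem rpow_two' (x : ℝ) : x ^ (2:ℝ) = x ^ 2 := by
  rw [← Real.rpow_natCast x 2]; norm_num

end Aux

/-- If the series `Σ_{i,j} c_{ij} f_{ij}` converges for every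
`{c_{ij}} ∈ (Σ_j ⊕ ℓ²(ι))_{ℓ²}`, then `{f_{ij}}` is a Bessel woven: there exists
`D > 0` with `Σ_{i,j} |⟨f, f_{ij}⟩|² ≤ D‖f‖²` for all `f ∈ H`. -/
theorem statement3
    {H : Type*} [NormedAddCommGroup H] [InnerProductSpace ℝ H] [CompleteSpace H]
    [TopologicalSpace.SeparableSpace H]
    {ι : Type*} [Countable ι] {m : ℕ}
    (F : ι → Fin m → H)
    (hconv : ∀ c : lp (fun _ : ι × Fin m => ℝ) 2,
      ∃ x : H, HasSum (fun p : ι × Fin m => c p • F p.1 p.2) x) :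
    ∃ D : ℝ, 0 < D ∧ ∀ f : H,
      ∑' p : ι × Fin m, ⟪f, F p.1 p.2⟫ ^ 2 ≤ D * ‖f‖ ^ 2 := by
  classical
  set G : ι × Fin m → H := fun p => F p.1 p.2 with hG
  -- Step 1: pointwise boundedness of the partial-sum operators
  have hpt : ∀ c : lp (fun _ : ι × Fin m => ℝ) 2, ∃ C : ℝ,
      ∀ s : Finset (ι × Fin m), ‖partialCLM G s c‖ ≤ C := by
    intro c
    obtain ⟨x, hx⟩ := hconv c
    -- use the net convergence directly
    have h : Filter.Tendsto (fun s : Finset (ι × Fin m) =>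
      ∑ p ∈ s, c p • G p) Filter.atTop (nhds x) := hx
    rw [Metric.tendsto_atTop] at h
    obtain ⟨s₀, hs₀⟩ := h 1 one_pos
    refine ⟨‖x‖ + 1 + ∑ p ∈ s₀, ‖c p • G p‖, fun s => ?_⟩
    have key : partialCLM G s c =
        (∑ p ∈ s ∪ s₀, c p • G p) - ∑ p ∈ (s ∪ s₀) \ s, c p • G p := by
      rw [partialCLM_apply, eq_sub_iff_add_eq, add_comm]
      exact Finset.sum_sdiff Finset.subset_union_left
    have h1 : ‖∑ p ∈ s ∪ s₀, c p • G p‖ ≤ ‖x‖ + 1 := by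
      have h4 := hs₀ (s ∪ s₀) Finset.subset_union_right
      rw [dist_eq_norm] at h4
      have h3 := norm_sub_norm_le (∑ p ∈ s ∪ s₀, c p • G p) x
      linarith
    have h2 : ‖∑ p ∈ (s ∪ s₀) \ s, c p • G p‖ ≤ ∑ p ∈ s₀, ‖c p • G p‖ := by
      calc ‖∑ p ∈ (s ∪ s₀) \ s, c p • G p‖ ≤ ∑ p ∈ (s ∪ s₀) \ s, ‖c p • G p‖ :=
            norm_sum_le _ _
        _ ≤ ∑ p ∈ s₀, ‖c p • G p‖ := by
            refine Finset.sum_le_sum_of_subset_of_nonneg ?_ (fun _ _ _ => norm_nonneg _)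
            intro p hp
            rcases Finset.mem_sdiff.mp hp with ⟨hp1, hp2⟩
            rcases Finset.mem_union.mp hp1 with h | h
            · exact absurd h hp2
            · exact h
    calc ‖partialCLM G s c‖ ≤ ‖∑ p ∈ s ∪ s₀, c p • G p‖ +
          ‖∑ p ∈ (s ∪ s₀) \ s, c p • G p‖ := by rw [key]; exact norm_sub_le _ _
      _ ≤ ‖x‖ + 1 + ∑ p ∈ s₀, ‖c p • G p‖ := by linarith
  -- Step 2: Banach–Steinhaus
  obtain ⟨C, hC⟩ := banach_steinhaus hpt
  have hC0 : 0 ≤ C := le_trans (norm_nonneg _) (hC (∅ : Finset (ι × Fin m)))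
  -- Step 3: the bound for each f and each finite set
  have key : ∀ (f : H) (s : Finset (ι × Fin m)),
      ∑ p ∈ s, ⟪f, G p⟫ ^ 2 ≤ (C ^ 2 + 1) * ‖f‖ ^ 2 := by
    intro f s
    set a : ι × Fin m → ℝ := fun p => ⟪f, G p⟫ with ha
    set S : ℝ := ∑ p ∈ s, a p ^ 2 with hS
    have hS0 : 0 ≤ S := Finset.sum_nonneg fun p _ => sq_nonneg _
    set c : lp (fun _ : ι × Fin m => ℝ) 2 := ∑ p ∈ s, lp.single 2 p (a p) with hc
    have hcs : ‖c‖ ^ 2 = S := by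
      have h2 : (0:ℝ) < (2 : ENNReal).toReal := by norm_num
      have := lp.norm_sum_single h2 a s
      rw [ENNReal.toReal_ofNat] at this
      calc ‖c‖ ^ 2 = ‖c‖ ^ (2:ℝ) := (rpow_two' _).symm
        _ = ∑ p ∈ s, ‖a p‖ ^ (2:ℝ) := this
        _ = S := by
            refine Finset.sum_congr rfl fun p _ => ?_
            rw [rpow_two', Real.norm_eq_abs, sq_abs]
    have hTc : partialCLM G s c = ∑ p ∈ s, a p • G p := by
      rw [partialCLM_apply]
      refine Finset.sum_congr rfl fun p hp => ?_
      have hb0 : ∀ b ∈ s, b ≠ p →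
          (lp.single 2 b (a b) : lp (fun _ : ι × Fin m => ℝ) 2) p = 0 :=
        fun b _ hbp => by simp [lp.single_apply, Ne.symm hbp]
      have hbs : (lp.single 2 p (a p) : lp (fun _ : ι × Fin m => ℝ) 2) p = a p :=
        by simp [lp.single_apply]
      have : c p = a p := by
        rw [hc, lp.coeFn_sum, Finset.sum_apply,
          Finset.sum_eq_single_of_mem p hp hb0, hbs]
      rw [this]
    have hSinner : S = ⟪f, partialCLM G s c⟫ := by
      rw [hTc, inner_sum]
      exact Finset.sum_congr rfl fun p _ => by
        rw [real_inner_smul_right, sq]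
    have hbound : S ≤ ‖f‖ * (C * Real.sqrt S) := by
      calc S = ⟪f, partialCLM G s c⟫ := hSinner
        _ ≤ ‖f‖ * ‖partialCLM G s c‖ :=
            real_inner_le_norm _ _
        _ ≤ ‖f‖ * (C * ‖c‖) := by
            refine mul_le_mul_of_nonneg_left ?_ (norm_nonneg _)
            exact le_trans ((partialCLM G s).le_opNorm c)
              (mul_le_mul_of_nonneg_right (hC s) (norm_nonneg _))
        _ = ‖f‖ * (C * Real.sqrt S) := by
            rw [← hcs, Real.sqrt_sq (norm_nonneg _)]
    have hfinal : S ≤ C ^ 2 * ‖f‖ ^ 2 := by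
      rcases eq_or_lt_of_le hS0 with h | h
      · rw [← h]; positivity
      · have hsq : Real.sqrt S ≤ ‖f‖ * C := by
          have hpos : 0 < Real.sqrt S := Real.sqrt_pos.mpr h
          have : Real.sqrt S * Real.sqrt S ≤ ‖f‖ * C * Real.sqrt S := by
            calc Real.sqrt S * Real.sqrt S = Real.sqrt S ^ 2 := (sq _).symm
              _ ≤ ‖f‖ * (C * Real.sqrt S) := by rw [Real.sq_sqrt hS0]; exact hbound
              _ = ‖f‖ * C * Real.sqrt S := by ring
          exact le_of_mul_le_mul_right this hpos
        calc S = Real.sqrt S ^ 2 := (Real.sq_sqrt hS0).symm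
          _ ≤ (‖f‖ * C) ^ 2 := by
              exact pow_le_pow_left₀ (Real.sqrt_nonneg _) hsq 2
          _ = C ^ 2 * ‖f‖ ^ 2 := by ring
    nlinarith [sq_nonneg ‖f‖]
  refine ⟨C ^ 2 + 1, by positivity, fun f => ?_⟩
  have hsummable : Summable (fun p : ι × Fin m => ⟪f, G p⟫ ^ 2) :=
    summable_of_sum_le (fun p => sq_nonneg _) (fun s => key f s)
  exact Summable.tsum_le_of_sum_le hsummable (key f)
end

section
/- If {f_{ij}}_{i∈I, j∈[m]} is a woven frame for H with universal bounds C and D and woven frame operator S_F, then {S_F f_{ij}}_{i∈I, j∈[m]} is a woven frame for H with universal lower bound C³ and universal upper bound D³. -/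
open scoped RealInnerProductSpace

private lemma amgm_aux (u v a b : ℝ) (hu : 0 < u) (hv : 0 < v) :
    a * b ≤ v / (2 * u) * a ^ 2 + u / (2 * v) * b ^ 2 := by
  rw [div_mul_eq_mul_div, div_mul_eq_mul_div,
    div_add_div _ _ (by positivity) (by positivity), le_div_iff₀ (by positivity)]
  nlinarith [sq_nonneg (v * a - u * b), mul_pos hu hv]

/-- If `{f_{ij}}` is a woven frame for `H` with universal bounds
`C, D` and (partition-wise) woven frame operator `S_F`, then `{S_F f_{ij}}` is a woven
frame for `H` with universal lower bound `C³` and universal upper bound `D³`. -/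
theorem statement8
    {H : Type*} [NormedAddCommGroup H] [InnerProductSpace ℝ H] [CompleteSpace H]
    [TopologicalSpace.SeparableSpace H]
    {ι : Type*} [Countable ι] {m : ℕ}
    (F : ι → Fin m → H) (C D : ℝ) (hC : 0 < C)
    (hwoven : ∀ σ : ι → Fin m, ∀ f : H,
      C * ‖f‖ ^ 2 ≤ ∑' i : ι, ⟪f, F i (σ i)⟫ ^ 2 ∧
      ∑' i : ι, ⟪f, F i (σ i)⟫ ^ 2 ≤ D * ‖f‖ ^ 2)
    (S : (ι → Fin m) → H →L[ℝ] H)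
    (hS : ∀ σ : ι → Fin m, ∀ f : H,
      HasSum (fun i : ι => ⟪f, F i (σ i)⟫ • F i (σ i)) (S σ f)) :
    ∀ σ : ι → Fin m, ∀ f : H,
      C ^ 3 * ‖f‖ ^ 2 ≤ ∑' i : ι, ⟪f, S σ (F i (σ i))⟫ ^ 2 ∧
      ∑' i : ι, ⟪f, S σ (F i (σ i))⟫ ^ 2 ≤ D ^ 3 * ‖f‖ ^ 2 := by
  intro σ f
  -- key: expansion of inner products against S σ x
  have key : ∀ x h : H,
      HasSum (fun i : ι => ⟪x, F i (σ i)⟫ * ⟪h, F i (σ i)⟫) ⟪h, S σ x⟫ := by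
    intro x h
    have := (innerSL ℝ h).hasSum (hS σ x)
    simpa [real_inner_smul_right] using this
  set g : H := S σ f with hg
  -- symmetry of S
  have symm : ∀ h : H, ⟪f, S σ h⟫ = ⟪g, h⟫ := by
    intro h
    have h1 := key h f
    have h2 : HasSum (fun i : ι => ⟪h, F i (σ i)⟫ * ⟪f, F i (σ i)⟫) ⟪h, g⟫ := by
      simpa [mul_comm] using key f h
    have := h1.unique h2
    rw [this, real_inner_comm]
  have hrw : (∑' i : ι, ⟪f, S σ (F i (σ i))⟫ ^ 2) = ∑' i : ι, ⟪g, F i (σ i)⟫ ^ 2 :=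
    tsum_congr fun i => by rw [symm (F i (σ i))]
  rw [hrw]
  obtain ⟨hBl, hBu⟩ := hwoven σ g
  by_cases hf : f = 0
  · have hg0 : g = 0 := by rw [hg, hf, map_zero]
    simp [hf, hg0, inner_zero_left]
  · have hfpos : (0 : ℝ) < ‖f‖ := norm_pos_iff.mpr hf
    -- sum of ⟪f,Fi⟫² is ⟪f,g⟫
    have hf2sum : HasSum (fun i : ι => ⟪f, F i (σ i)⟫ ^ 2) ⟪f, g⟫ := by
      simpa [sq] using key f f
    obtain ⟨hAl, hAu⟩ := hwoven σ f
    rw [hf2sum.tsum_eq] at hAl hAu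
    have hD : 0 < D := by nlinarith [mul_pos hC (pow_pos hfpos 2)]
    -- lower bound: C * ‖f‖ ≤ ‖g‖
    have hfg_le : ⟪f, g⟫ ≤ ‖f‖ * ‖g‖ := real_inner_le_norm f g
    have hCg : C * ‖f‖ ≤ ‖g‖ := by
      have : C * ‖f‖ * ‖f‖ ≤ ‖g‖ * ‖f‖ := by nlinarith
      exact le_of_mul_le_mul_right this hfpos
    constructor
    · have h1 : C ^ 2 * ‖f‖ ^ 2 ≤ ‖g‖ ^ 2 := by
        nlinarith [norm_nonneg g, mul_nonneg hC.le hfpos.le]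
      nlinarith
    · -- upper bound: ‖g‖ ≤ D * ‖f‖
      by_cases hgz : g = 0
      · have h0 : (∑' i : ι, ⟪g, F i (σ i)⟫ ^ 2) ≤ 0 := by
          set_option linter.unnecessarySimpa false in simpa [hgz] using hBu
        have h1 : (0 : ℝ) ≤ D ^ 3 * ‖f‖ ^ 2 := by positivity
        linarith
      · have hgpos : (0 : ℝ) < ‖g‖ := norm_pos_iff.mpr hgz
        have hg2 : HasSum (fun i : ι => ⟪g, F i (σ i)⟫ ^ 2) ⟪g, S σ g⟫ := by
          simpa [sq] using key g g
        rw [hg2.tsum_eq] at hBl hBu ⊢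
        have hgg : HasSum (fun i : ι => ⟪f, F i (σ i)⟫ * ⟪g, F i (σ i)⟫) ⟪g, g⟫ :=
          key f g
        have hmix : HasSum
            (fun i : ι => ‖g‖ / (2 * ‖f‖) * ⟪f, F i (σ i)⟫ ^ 2
              + ‖f‖ / (2 * ‖g‖) * ⟪g, F i (σ i)⟫ ^ 2)
            (‖g‖ / (2 * ‖f‖) * ⟪f, g⟫ + ‖f‖ / (2 * ‖g‖) * ⟪g, S σ g⟫) :=
          (hf2sum.mul_left _).add (hg2.mul_left _)
        have hle : ⟪g, g⟫ ≤ ‖g‖ / (2 * ‖f‖) * ⟪f, g⟫ + ‖f‖ / (2 * ‖g‖) * ⟪g, S σ g⟫ :=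
          hasSum_le (fun i => amgm_aux ‖f‖ ‖g‖ _ _ hfpos hgpos) hgg hmix
        have hnorm : ⟪g, g⟫ = ‖g‖ ^ 2 := real_inner_self_eq_norm_sq g
        have h1 : ‖g‖ / (2 * ‖f‖) * ⟪f, g⟫ ≤ ‖g‖ / (2 * ‖f‖) * (D * ‖f‖ ^ 2) :=
          mul_le_mul_of_nonneg_left hAu (by positivity)
        have h2 : ‖f‖ / (2 * ‖g‖) * ⟪g, S σ g⟫ ≤ ‖f‖ / (2 * ‖g‖) * (D * ‖g‖ ^ 2) :=
          mul_le_mul_of_nonneg_left hBu (by positivity)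
        have hE : ‖g‖ / (2 * ‖f‖) * (D * ‖f‖ ^ 2) + ‖f‖ / (2 * ‖g‖) * (D * ‖g‖ ^ 2)
            = D * ‖f‖ * ‖g‖ := by
          field_simp
          ring
        have hv : ‖g‖ ^ 2 ≤ D * ‖f‖ * ‖g‖ := by
          rw [← hnorm]; linarith
        have hvD : ‖g‖ ≤ D * ‖f‖ := by
          have : ‖g‖ * ‖g‖ ≤ D * ‖f‖ * ‖g‖ := by nlinarith
          exact le_of_mul_le_mul_right this hgpos
        nlinarith [mul_le_mul_of_nonneg_left (mul_self_le_mul_self hgpos.le hvD) hD.le]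
end

section
/- Let F = {f_{ij}}, G = {g_{ij}} be Bessel wovens in H with analysis operators U_F, U_G and frame operators S_F, S_G, and let E₁, E₂ be bounded operators on H such that U_F E₁* + U_G E₂* is bounded below. Then the operator S = E₁ S_F E₁* + E₂ S_G E₂* + E₁ U_F* U_G E₂* + E₂ U_G* U_F E₁* is a positive (invertible) operator on H, and equals (U_F E₁* + U_G E₂*)*(U_F E₁* + U_G E₂*). -/
open scoped RealInnerProductSpace

set_option maxHeartbeats 1000000 in
/-- Let `F, G` be Bessel wovens in `H` with analysis operators
`U_F, U_G` and frame operators `S_F = U_F* U_F`, `S_G = U_G* U_G`, and let `E₁, E₂` be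
bounded operators on `H` such that `A = U_F E₁* + U_G E₂*` is bounded below. Then
`S = E₁ S_F E₁* + E₂ S_G E₂* + E₁ U_F* U_G E₂* + E₂ U_G* U_F E₁*` equals `A* A` and is
a positive invertible operator on `H`. -/
theorem statement11
    {H : Type*} [NormedAddCommGroup H] [InnerProductSpace ℝ H] [CompleteSpace H]
    [TopologicalSpace.SeparableSpace H]
    {ι : Type*} [Countable ι] {m : ℕ}
    (F G : ι → Fin m → H)
    (UF UG : H →L[ℝ] lp (fun _ : ι × Fin m => ℝ) 2)
    (hUF : ∀ (f : H) (p : ι × Fin m), (UF f : ∀ _ : ι × Fin m, ℝ) p = ⟪f, F p.1 p.2⟫)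
    (hUG : ∀ (f : H) (p : ι × Fin m), (UG f : ∀ _ : ι × Fin m, ℝ) p = ⟪f, G p.1 p.2⟫)
    (SF SG : H →L[ℝ] H)
    (hSF : SF = (ContinuousLinearMap.adjoint UF).comp UF)
    (hSG : SG = (ContinuousLinearMap.adjoint UG).comp UG)
    (E₁ E₂ : H →L[ℝ] H)
    (A : H →L[ℝ] lp (fun _ : ι × Fin m => ℝ) 2)
    (hA : A = UF.comp (ContinuousLinearMap.adjoint E₁) +
      UG.comp (ContinuousLinearMap.adjoint E₂))
    (hbelow : ∃ c : ℝ, 0 < c ∧ ∀ f : H, c * ‖f‖ ≤ ‖A f‖)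
    (S : H →L[ℝ] H)
    (hSdef : S = E₁.comp (SF.comp (ContinuousLinearMap.adjoint E₁)) +
      E₂.comp (SG.comp (ContinuousLinearMap.adjoint E₂)) +
      E₁.comp ((ContinuousLinearMap.adjoint UF).comp
        (UG.comp (ContinuousLinearMap.adjoint E₂))) +
      E₂.comp ((ContinuousLinearMap.adjoint UG).comp
        (UF.comp (ContinuousLinearMap.adjoint E₁)))) :
    S = (ContinuousLinearMap.adjoint A).comp A ∧
      (∀ f : H, 0 ≤ ⟪S f, f⟫) ∧ Function.Bijective S := by
  obtain ⟨c, hc, hb⟩ := hbelow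
  have hS : S = (ContinuousLinearMap.adjoint A).comp A := by
    subst hA hSF hSG hSdef
    simp only [ContinuousLinearMap.adjoint_comp, map_add,
      ContinuousLinearMap.adjoint_adjoint, ContinuousLinearMap.add_comp,
      ContinuousLinearMap.comp_add, ContinuousLinearMap.comp_assoc]
    abel
  have hpos : ∀ f : H, ⟪S f, f⟫ = ‖A f‖ ^ 2 := by
    intro f
    rw [hS]
    simp only [ContinuousLinearMap.comp_apply]
    rw [ContinuousLinearMap.adjoint_inner_left, real_inner_self_eq_norm_sq]
  refine ⟨hS, fun f => by rw [hpos]; positivity, ?_⟩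
  -- S is bounded below with constant c^2
  have hSb : ∀ f : H, c ^ 2 * ‖f‖ ≤ ‖S f‖ := by
    intro f
    rcases eq_or_ne f 0 with rfl | hf
    · simp
    have h1 : (c * ‖f‖) ^ 2 ≤ ‖A f‖ ^ 2 := by
      have := hb f
      have h0 : 0 ≤ c * ‖f‖ := by positivity
      nlinarith
    have h2 : ‖A f‖ ^ 2 ≤ ‖S f‖ * ‖f‖ := by
      rw [← hpos f]; exact real_inner_le_norm _ _
    have hfpos : 0 < ‖f‖ := norm_pos_iff.mpr hf
    nlinarith [h1, h2, hfpos]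
  have hinj : Function.Injective S := by
    intro x y hxy
    have : S (x - y) = 0 := by rw [map_sub, hxy, sub_self]
    have h := hSb (x - y)
    rw [this] at h
    simp only [norm_zero] at h
    have : ‖x - y‖ ≤ 0 := by
      nlinarith [norm_nonneg (x - y), sq_nonneg c, mul_pos hc hc]
    have : x - y = 0 := by
      rwa [← norm_le_zero_iff]
    exact sub_eq_zero.mp this
  refine ⟨hinj, ?_⟩
  -- surjective: closed range + dense range
  have hanti : AntilipschitzWith (⟨c ^ 2, by positivity⟩ : NNReal)⁻¹ S := by
    refine S.antilipschitz_of_bound fun x => ?_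
    change ‖x‖ ≤ (c ^ 2)⁻¹ * ‖S x‖
    have hc2 : (0:ℝ) < c ^ 2 := by positivity
    have h := hSb x
    calc ‖x‖ = (c ^ 2)⁻¹ * (c ^ 2 * ‖x‖) := by field_simp
      _ ≤ (c ^ 2)⁻¹ * ‖S x‖ :=
        mul_le_mul_of_nonneg_left h (inv_nonneg.mpr hc2.le)
  have hclosed : IsClosed (Set.range S) :=
    hanti.isClosed_range S.uniformContinuous
  have hclosed' : IsClosed ((LinearMap.range (S : H →ₗ[ℝ] H) : Submodule ℝ H) : Set H) := by
    exact hclosed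
  haveI : CompleteSpace (LinearMap.range (S : H →ₗ[ℝ] H) : Submodule ℝ H) :=
    hclosed'.completeSpace_coe
  have horth : (LinearMap.range (S : H →ₗ[ℝ] H) : Submodule ℝ H)ᗮ = ⊥ := by
    rw [Submodule.eq_bot_iff]
    intro x hx
    have hx0 : ⟪S x, x⟫ = 0 := by
      have h0 := (Submodule.mem_orthogonal _ x).mp hx (S x) (LinearMap.mem_range_self _ x)
      exact h0
    have hAx : ‖A x‖ ^ 2 = 0 := by rw [← hpos x, hx0]
    have hAx0 : ‖A x‖ = 0 := by nlinarith [norm_nonneg (A x)]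
    have := hb x
    rw [hAx0] at this
    have : ‖x‖ ≤ 0 := by nlinarith [norm_nonneg x]
    rwa [← norm_le_zero_iff]
  have hrange : LinearMap.range (S : H →ₗ[ℝ] H) = ⊤ := by
    rwa [Submodule.orthogonal_eq_bot_iff] at horth
  intro y
  have := hrange ▸ Submodule.mem_top (x := y)
  exact this
end

section
/- Let W be a dense subspace of a Hilbert space H and suppose {f_{ij}}_{i∈I, j∈[m]} ⊂ H satisfies C‖f‖² ≤ Σ_{i∈σ_j, j∈[m]} |⟨f, f_{ij}⟩|² ≤ D‖f‖² for all f ∈ W and every partition {σ_j} of I. Then the same inequalities hold for all f ∈ H; i.e., {f_{ij}} is a woven frame for H with universal bounds C and D. -/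
open scoped RealInnerProductSpace

/-- Let `W` be a dense subspace of a Hilbert space `H` and suppose
`{f_{ij}} ⊂ H` satisfies, for every partition `σ` of the index set,
`C‖f‖² ≤ Σ_i |⟨f, f_{i,σ(i)}⟩|² ≤ D‖f‖²` for all `f ∈ W`. Then the same inequalities
hold for all `f ∈ H`, i.e. `{f_{ij}}` is a woven frame for `H` with universal
bounds `C, D`. -/
theorem statement12
    {H : Type*} [NormedAddCommGroup H] [InnerProductSpace ℝ H] [CompleteSpace H]
    [TopologicalSpace.SeparableSpace H]
    {ι : Type*} [Countable ι] {m : ℕ}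
    (W : Submodule ℝ H) (hW : Dense (W : Set H))
    (F : ι → Fin m → H) (C D : ℝ) (hC : 0 < C)
    (hframeW : ∀ σ : ι → Fin m, ∀ f ∈ W,
      C * ‖f‖ ^ 2 ≤ ∑' i : ι, ⟪f, F i (σ i)⟫ ^ 2 ∧
      ∑' i : ι, ⟪f, F i (σ i)⟫ ^ 2 ≤ D * ‖f‖ ^ 2) :
    ∀ σ : ι → Fin m, ∀ f : H,
      C * ‖f‖ ^ 2 ≤ ∑' i : ι, ⟪f, F i (σ i)⟫ ^ 2 ∧
      ∑' i : ι, ⟪f, F i (σ i)⟫ ^ 2 ≤ D * ‖f‖ ^ 2 := by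
  intro σ f
  set a : H → ι → ℝ := fun g i => ⟪g, F i (σ i)⟫ with ha
  -- summability on W
  have hsumW : ∀ g ∈ W, Summable (fun i => a g i ^ 2) := by
    intro g hg
    by_cases hg0 : g = (0 : H)
    · simp only [ha, hg0]
      simpa using summable_zero
    · by_contra hns
      have h1 := (hframeW σ g hg).1
      rw [tsum_eq_zero_of_not_summable hns] at h1
      have hgn : 0 < ‖g‖ := norm_pos_iff.mpr hg0
      nlinarith [mul_pos hC (pow_pos hgn 2)]
  have hacont : ∀ i, Continuous fun g : H => a g i := by
    intro i
    exact Continuous.inner continuous_id continuous_const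
  -- finite partial sums bounded by D‖g‖² for all g
  have hfin : ∀ (s : Finset ι) (g : H), ∑ i ∈ s, a g i ^ 2 ≤ D * ‖g‖ ^ 2 := by
    intro s
    have hclosed : IsClosed {g : H | ∑ i ∈ s, a g i ^ 2 ≤ D * ‖g‖ ^ 2} := by
      apply isClosed_le
      · exact continuous_finset_sum s fun i _ => ((hacont i).pow 2)
      · exact continuous_const.mul ((continuous_norm).pow 2)
    have hsub : (W : Set H) ⊆ {g : H | ∑ i ∈ s, a g i ^ 2 ≤ D * ‖g‖ ^ 2} := by
      intro g hg
      exact le_trans (Summable.sum_le_tsum s (fun i _ => sq_nonneg _) (hsumW g hg))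
        (hframeW σ g hg).2
    intro g
    have : g ∈ closure (W : Set H) := hW g
    exact closure_minimal hsub hclosed this
  have hsum : ∀ g : H, Summable (fun i => a g i ^ 2) := fun g =>
    summable_of_sum_le (fun i => sq_nonneg _) (fun s => hfin s g)
  have hupper : ∀ g : H, ∑' i, a g i ^ 2 ≤ D * ‖g‖ ^ 2 := fun g =>
    Summable.tsum_le_of_sum_le (hsum g) (fun s => hfin s g)
  -- build the analysis map into ℓ²
  set E : ℝ := max D 0 with hE
  have hEnn : 0 ≤ E := le_max_right _ _
  have hupperE : ∀ g : H, ∑' i, a g i ^ 2 ≤ E * ‖g‖ ^ 2 := fun g =>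
    le_trans (hupper g) (mul_le_mul_of_nonneg_right (le_max_left _ _) (sq_nonneg _))
  have hmem : ∀ g : H, Memℓp (a g) 2 := by
    intro g
    apply memℓp_gen
    have : (fun i => ‖a g i‖ ^ ((2 : ENNReal).toReal)) = fun i => a g i ^ 2 := by
      funext i
      rw [show ((2:ENNReal)).toReal = ((2:ℕ):ℝ) by norm_num, Real.rpow_natCast]
      simp [sq_abs]
    rw [this]
    exact hsum g
  set Φ : H → lp (fun _ : ι => ℝ) 2 := fun g => ⟨a g, hmem g⟩ with hΦ
  have hΦnorm : ∀ g : H, ‖Φ g‖ ^ 2 = ∑' i, a g i ^ 2 := by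
    intro g
    have h2 : (0:ℝ) < (2 : ENNReal).toReal := by norm_num
    have := lp.norm_rpow_eq_tsum h2 (Φ g)
    have hL : ‖Φ g‖ ^ ((2 : ENNReal).toReal) = ‖Φ g‖ ^ 2 := by
      rw [show ((2:ENNReal)).toReal = ((2:ℕ):ℝ) by norm_num, Real.rpow_natCast]
    have hR : ∀ i, ‖(Φ g) i‖ ^ ((2 : ENNReal).toReal) = a g i ^ 2 := by
      intro i
      rw [show ((2:ENNReal)).toReal = ((2:ℕ):ℝ) by norm_num, Real.rpow_natCast]
      simp [hΦ, sq_abs]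
    rw [hL] at this
    rw [this]
    exact tsum_congr hR
  have hΦsub : ∀ g h : H, Φ (g - h) = Φ g - Φ h := by
    intro g h
    ext i
    simp [hΦ, ha, inner_sub_left]
    rfl
  have hΦle : ∀ g : H, ‖Φ g‖ ≤ Real.sqrt E * ‖g‖ := by
    intro g
    have h1 : ‖Φ g‖ ^ 2 ≤ (Real.sqrt E * ‖g‖) ^ 2 := by
      rw [hΦnorm g, mul_pow, Real.sq_sqrt hEnn]
      exact hupperE g
    have h2 : 0 ≤ Real.sqrt E * ‖g‖ := by positivity
    nlinarith [norm_nonneg (Φ g)]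
  have hΦcont : Continuous Φ := by
    apply LipschitzWith.continuous (K := Real.toNNReal (Real.sqrt E))
    apply LipschitzWith.of_dist_le_mul
    intro g h
    rw [dist_eq_norm, dist_eq_norm, ← hΦsub]
    calc ‖Φ (g - h)‖ ≤ Real.sqrt E * ‖g - h‖ := hΦle _
      _ = (Real.toNNReal (Real.sqrt E) : ℝ) * ‖g - h‖ := by
          rw [Real.coe_toNNReal _ (Real.sqrt_nonneg E)]
  have hlow : ∀ g : H, C * ‖g‖ ^ 2 ≤ ‖Φ g‖ ^ 2 := by
    intro g
    have hclosed : IsClosed {g : H | C * ‖g‖ ^ 2 ≤ ‖Φ g‖ ^ 2} :=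
      isClosed_le (continuous_const.mul (continuous_norm.pow 2))
        ((hΦcont.norm).pow 2)
    have hsub : (W : Set H) ⊆ {g : H | C * ‖g‖ ^ 2 ≤ ‖Φ g‖ ^ 2} := by
      intro g hg
      have := (hframeW σ g hg).1
      rw [Set.mem_setOf_eq, hΦnorm g]
      exact this
    exact closure_minimal hsub hclosed (hW g)
  refine ⟨?_, hupper f⟩
  have := hlow f
  rwa [hΦnorm f] at this
end
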